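/- There exist d₁ > 0 and d₂ > 0 such that for every λ in the domain D of R with −d₁ < Re λ < d₂, one has Re R(λ) < 0. -/

import Mathlib

open MeasureTheory

/-- The discrete (pole) part of the reduced Evans-function expression. -/
noncomputable def Rd (z : ℂ) : ℂ :=
  (6075 * (Real.pi : ℂ) ^ 2 / 8192) * (z - 5 / 4)⁻¹
    - (81 * (Real.pi : ℂ) ^ 2 / 8192) * (z + 3 / 4)⁻¹

/-- The continuous-spectrum part of the reduced Evans-function expression. -/
noncomputable def Rc (z : ℂ) : ℂ :=
  ∫ κ in Set.Ioi (1 : ℝ),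
    (((9 * Real.pi ^ 2 / 16) * κ ^ 4 * (1 + κ ^ 2) ^ 2 /
        ((κ ^ 2 + 9 / 4) * (κ ^ 2 + 1 / 4)) *
        (1 / Real.sinh (Real.pi * κ)) ^ 2 : ℝ) : ℂ) * (z + (κ : ℂ) ^ 2 + 1)⁻¹

/-- The full function `R = R_d + R_c`. -/
noncomputable def R (z : ℂ) : ℂ := Rd z + Rc z

/-- The domain `D = ℂ \ ({5/4, -3/4} ∪ (-∞, -2])`. -/
def Dom : Set ℂ :=
  {z | z ≠ 5 / 4 ∧ z ≠ -3 / 4 ∧ ¬(z.im = 0 ∧ z.re ≤ -2)}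

/-- `z` is a solution of the reduced eigenvalue equation
`α + β √(1 + z + ℓ) = R z`, with `z ∈ D` and `1 + z + ℓ ∉ (-∞, 0]`,
where the square root is the principal complex square root. -/
noncomputable def IsSolution (α β ℓ : ℝ) (z : ℂ) : Prop :=
  z ∈ Dom ∧ ¬((1 + z + (ℓ : ℂ)).im = 0 ∧ (1 + z + (ℓ : ℂ)).re ≤ 0) ∧
    (α : ℂ) + (β : ℂ) * (1 + z + (ℓ : ℂ)) ^ ((1 : ℂ) / 2) = R z

/-
Write `N = |z - 5/4|²`. For `|Re z| < 1/4` the pole at `5/4` contributes at most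
`(6075π²/8192)(Re z - 5/4)/N < -6/N` to `Re R z`, while the pole at `-3/4` contributes
a nonpositive amount. For `κ > 1` one has `Re (z + κ² + 1)⁻¹ ≤ (κ² + 9/4)/N`, so
`Re R_c z ≤ M/N` with `M = ∫₁^∞ w(κ)(κ² + 9/4) dκ`, where `w` is the weight of `R_c`.
Finally `sinh x ≥ x⁵/5!` gives `w(κ)(κ² + 9/4) ≤ 5κ⁻⁴`, hence `M ≤ 5/3 < 6`.
-/
open Set

theorem Real.pow_div_factorial_le_sinh {x : ℝ} (hx : 0 ≤ x) (n : ℕ) :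
    x ^ (2 * n + 1) / (2 * n + 1).factorial ≤ Real.sinh x :=
  le_hasSum (Real.hasSum_sinh x) n fun _ _ => by positivity

theorem Complex.re_inv_add_ofReal_le {z : ℂ} {c t : ℝ} (hc : z.re < c) (ht : c ≤ 2 * z.re + t) :
    ((z + t)⁻¹).re ≤ (t + c) / Complex.normSq (z - c) := by
  set a := z.re + t
  set b := c - z.re
  have hb : 0 < b := sub_pos.2 hc
  have hab : b ≤ a := by linarith
  have ha : 0 < a := hb.trans_le hab
  have hre : ((z + t)⁻¹).re = a / (a ^ 2 + z.im ^ 2) := by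
    simp [Complex.inv_re, Complex.normSq_apply, a]; ring
  have hN : Complex.normSq (z - c) = b ^ 2 + z.im ^ 2 := by
    simp [Complex.normSq_apply, b]; ring
  rw [hre, hN, show t + c = a + b by ring,
    div_le_div_iff₀ (add_pos_of_pos_of_nonneg (pow_pos ha 2) (sq_nonneg _))
      (add_pos_of_pos_of_nonneg (pow_pos hb 2) (sq_nonneg _))]
  -- (a + b)(a² + y²) - a(b² + y²) = a(a - b)(a + b) + a²b + by²
  nlinarith [mul_nonneg (mul_nonneg ha.le (sub_nonneg.2 hab)) (add_pos ha hb).le,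
    mul_nonneg (sq_nonneg a) hb.le, mul_nonneg hb.le (sq_nonneg z.im)]

noncomputable def rcWeight (κ : ℝ) : ℝ :=
  (9 * Real.pi ^ 2 / 16) * κ ^ 4 * (1 + κ ^ 2) ^ 2 /
    ((κ ^ 2 + 9 / 4) * (κ ^ 2 + 1 / 4)) * (1 / Real.sinh (Real.pi * κ)) ^ 2

theorem rcWeight_nonneg (κ : ℝ) : 0 ≤ rcWeight κ := by
  unfold rcWeight; positivity

theorem rcWeight_mul_le {κ : ℝ} (hκ : 1 ≤ κ) :
    rcWeight κ * (κ ^ 2 + 9 / 4) ≤ 5 * κ ^ (-4 : ℝ) := by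
  have hπ := Real.pi_gt_three
  have hκ0 : 0 < κ := by linarith
  have hsinh : (Real.pi * κ) ^ 5 / 120 ≤ Real.sinh (Real.pi * κ) := by
    simpa [Nat.factorial] using Real.pow_div_factorial_le_sinh (by positivity : 0 ≤ Real.pi * κ) 2
  have hpoly : κ ^ 4 * (1 + κ ^ 2) ^ 2 / (κ ^ 2 + 1 / 4) ≤ 4 * κ ^ 6 := by
    rw [div_le_iff₀ (by positivity)]
    nlinarith [pow_le_pow_right₀ hκ (by norm_num : 4 ≤ 6),
      pow_le_pow_right₀ hκ (by norm_num : 6 ≤ 8)]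
  rw [Real.rpow_neg hκ0.le, show (4 : ℝ) = (4 : ℕ) by norm_num, Real.rpow_natCast]
  calc rcWeight κ * (κ ^ 2 + 9 / 4)
      = 9 * Real.pi ^ 2 / 16 * (κ ^ 4 * (1 + κ ^ 2) ^ 2 / (κ ^ 2 + 1 / 4)) /
          Real.sinh (Real.pi * κ) ^ 2 := by
        unfold rcWeight; field_simp
    _ ≤ 9 * Real.pi ^ 2 / 16 * (4 * κ ^ 6) / ((Real.pi * κ) ^ 5 / 120) ^ 2 := by
        gcongr
    _ = 32400 / (Real.pi ^ 8 * κ ^ 4) := by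
        field_simp; ring
    _ ≤ 32400 / (3 ^ 8 * κ ^ 4) := by gcongr
    _ ≤ 5 * (κ ^ 4)⁻¹ := by
        rw [div_le_iff₀ (by positivity)]; field_simp; norm_num

theorem measurable_rcWeight : Measurable rcWeight := by
  unfold rcWeight; fun_prop

theorem integrableOn_rcWeight_mul :
    IntegrableOn (fun κ => rcWeight κ * (κ ^ 2 + 9 / 4)) (Ioi 1) := by
  refine ((integrableOn_Ioi_rpow_of_lt (by norm_num : (-4 : ℝ) < -1) one_pos).const_mul 5).mono'
    (measurable_rcWeight.mul (by fun_prop)).aestronglyMeasurable ?_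
  filter_upwards [ae_restrict_mem measurableSet_Ioi] with κ hκ
  rw [Real.norm_of_nonneg (mul_nonneg (rcWeight_nonneg κ) (by positivity))]
  exact rcWeight_mul_le (le_of_lt hκ)

theorem integral_rcWeight_mul_le :
    ∫ κ in Ioi (1 : ℝ), rcWeight κ * (κ ^ 2 + 9 / 4) ≤ 5 / 3 :=
  calc _ ≤ ∫ κ in Ioi (1 : ℝ), 5 * κ ^ (-4 : ℝ) :=
        setIntegral_mono_on integrableOn_rcWeight_mul
          ((integrableOn_Ioi_rpow_of_lt (by norm_num) one_pos).const_mul 5) measurableSet_Ioi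
          fun κ hκ => rcWeight_mul_le (le_of_lt hκ)
    _ = 5 / 3 := by
        rw [integral_const_mul, integral_Ioi_rpow_of_lt (by norm_num) one_pos]; norm_num

theorem re_Rc_le {z : ℂ} (hz : -3 / 8 ≤ z.re) (hz' : z.re < 5 / 4) :
    (Rc z).re ≤
      (∫ κ in Ioi (1 : ℝ), rcWeight κ * (κ ^ 2 + 9 / 4)) / Complex.normSq (z - 5 / 4) := by
  have hshift (κ : ℝ) : z + (κ : ℂ) ^ 2 + 1 = z + ((κ ^ 2 + 1 : ℝ) : ℂ) := by push_cast; ring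
  have hre : ∀ κ ∈ Ioi (1 : ℝ),
      ((z + (κ : ℂ) ^ 2 + 1)⁻¹).re ≤ (κ ^ 2 + 9 / 4) / Complex.normSq (z - 5 / 4) := by
    intro κ hκ
    have := Complex.re_inv_add_ofReal_le (z := z) (c := 5 / 4) (t := κ ^ 2 + 1) (by linarith)
      (by nlinarith [mem_Ioi.1 hκ])
    rw [hshift]
    convert this using 2 <;> push_cast <;> ring
  have hnorm : ∀ κ ∈ Ioi (1 : ℝ), ‖(z + (κ : ℂ) ^ 2 + 1)⁻¹‖ ≤ κ ^ 2 + 9 / 4 := by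
    intro κ hκ
    have hone : 1 ≤ ‖z + (κ : ℂ) ^ 2 + 1‖ := by
      refine le_trans ?_ (Complex.re_le_norm _)
      rw [hshift, Complex.add_re, Complex.ofReal_re]
      nlinarith [mem_Ioi.1 hκ]
    rw [norm_inv]
    linarith [inv_le_one_of_one_le₀ hone, sq_nonneg κ]
  have hint : IntegrableOn (fun κ : ℝ => (rcWeight κ : ℂ) * (z + (κ : ℂ) ^ 2 + 1)⁻¹) (Ioi 1) := by
    have hmeas : Measurable fun κ : ℝ => (rcWeight κ : ℂ) * (z + (κ : ℂ) ^ 2 + 1)⁻¹ :=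
      (Complex.measurable_ofReal.comp measurable_rcWeight).mul (by fun_prop)
    refine integrableOn_rcWeight_mul.mono' hmeas.aestronglyMeasurable ?_
    filter_upwards [ae_restrict_mem measurableSet_Ioi] with κ hκ
    rw [norm_mul, Complex.norm_real, Real.norm_of_nonneg (rcWeight_nonneg κ)]
    exact mul_le_mul_of_nonneg_left (hnorm κ hκ) (rcWeight_nonneg κ)
  have hRc : Rc z = ∫ κ in Ioi (1 : ℝ), (rcWeight κ : ℂ) * (z + (κ : ℂ) ^ 2 + 1)⁻¹ := rfl
  have hint_re : IntegrableOn (fun κ : ℝ => rcWeight κ * ((z + (κ : ℂ) ^ 2 + 1)⁻¹).re) (Ioi 1) := by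
    simpa only [IntegrableOn, RCLike.re_to_complex, Complex.re_ofReal_mul] using hint.re
  calc (Rc z).re = ∫ κ in Ioi (1 : ℝ), ((rcWeight κ : ℂ) * (z + (κ : ℂ) ^ 2 + 1)⁻¹).re := by
        rw [hRc]; exact (integral_re hint).symm
    _ = ∫ κ in Ioi (1 : ℝ), rcWeight κ * ((z + (κ : ℂ) ^ 2 + 1)⁻¹).re := by
        simp only [Complex.re_ofReal_mul]
    _ ≤ ∫ κ in Ioi (1 : ℝ), rcWeight κ * (κ ^ 2 + 9 / 4) / Complex.normSq (z - 5 / 4) :=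
        setIntegral_mono_on hint_re (integrableOn_rcWeight_mul.div_const _) measurableSet_Ioi
          fun κ hκ => by
            rw [mul_div_assoc]
            exact mul_le_mul_of_nonneg_left (hre κ hκ) (rcWeight_nonneg κ)
    _ = _ := integral_div _ _

theorem re_Rd_le {z : ℂ} (hz : -3 / 4 ≤ z.re) :
    (Rd z).re ≤ 6075 * Real.pi ^ 2 / 8192 * (z.re - 5 / 4) / Complex.normSq (z - 5 / 4) := by
  have hpole : ((z - 5 / 4)⁻¹).re = (z.re - 5 / 4) / Complex.normSq (z - 5 / 4) := by
    simp [Complex.inv_re]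
  have hsmall : 0 ≤ ((z + 3 / 4)⁻¹).re := by
    rw [Complex.inv_re]
    exact div_nonneg (by simp; linarith) (Complex.normSq_nonneg _)
  have hRd : Rd z = ((6075 * Real.pi ^ 2 / 8192 : ℝ) : ℂ) * (z - 5 / 4)⁻¹
      - ((81 * Real.pi ^ 2 / 8192 : ℝ) : ℂ) * (z + 3 / 4)⁻¹ := by
    unfold Rd; push_cast; ring
  rw [hRd, Complex.sub_re, Complex.re_ofReal_mul, Complex.re_ofReal_mul, hpole]
  linarith [mul_nonneg (by positivity : (0 : ℝ) ≤ 81 * Real.pi ^ 2 / 8192) hsmall,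
    mul_div_assoc (6075 * Real.pi ^ 2 / 8192) (z.re - 5 / 4) (Complex.normSq (z - 5 / 4))]

/-- There exist `d₁ > 0`, `d₂ > 0` such that `Re R(λ) < 0` whenever `λ ∈ D`
and `-d₁ < Re λ < d₂`. -/
theorem stmt9 :
    ∃ d₁ d₂ : ℝ, 0 < d₁ ∧ 0 < d₂ ∧
      ∀ z : ℂ, z ∈ Dom → -d₁ < z.re → z.re < d₂ → (R z).re < 0 := by
  refine ⟨1 / 4, 1 / 4, by norm_num, by norm_num, fun z _ hlo hhi => ?_⟩
  have hN : 0 < Complex.normSq (z - 5 / 4) := by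
    refine Complex.normSq_pos.2 (sub_ne_zero.2 fun h => ?_)
    rw [h] at hhi; norm_num at hhi
  have hRc := (re_Rc_le (by linarith) (by linarith)).trans
    (div_le_div_of_nonneg_right integral_rcWeight_mul_le hN.le)
  have hπ : 9 ≤ Real.pi ^ 2 := by nlinarith [Real.pi_gt_three]
  calc (R z).re = (Rd z).re + (Rc z).re := Complex.add_re _ _
    _ ≤ (6075 * Real.pi ^ 2 / 8192 * (z.re - 5 / 4) + 5 / 3) / Complex.normSq (z - 5 / 4) := by
        rw [add_div]; linarith [re_Rd_le (z := z) (by linarith)]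
    _ < 0 := div_neg_of_neg_of_pos (by nlinarith) hN
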